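/- arXiv:2009.02966 — 8 statements merged into one kernel-verified Lean document; each statement's English description precedes it below -/
import Mathlib

section
/- The contravariant constructions Ω and Σ form an adjunction between the category LSS of locally small spaces with bounded continuous maps and the category LocS: the functor Ω : LSS → LocS, given on objects by Ω(X, L_X) = (L_X^wo, L_X) and on morphisms by sending a bounded continuous map f to the right Galois adjoint of the preimage frame homomorphism L_Y^wo → L_X^wo, is left adjoint to the functor Σ : LocS → LSS, given on objects by Σ(L, L_s) = (Spec(L), Δ_L(L_s)) and on morphisms by restricting a special localic map h_* : M → L to Spec(M) → Spec(L). -/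
open Set TopologicalSpace CategoryTheory

universe u



/-! ### Frames: spectra -/

/-- The set of non-unit primes of a frame. -/
def SpecS (L : Type u) [Order.Frame L] : Set L :=
  {p | p ≠ ⊤ ∧ ∀ a b : L, p = a ⊓ b → p = a ∨ p = b}

/-- `DeltaS a = { p ∈ Spec L : a ≰ p }`. -/
def DeltaS {L : Type u} [Order.Frame L] (a : L) : Set (SpecS L) :=
  {p | ¬ a ≤ (p : L)}

variable {L M N : Type u} [Order.Frame L] [Order.Frame M] [Order.Frame N]

lemma SpecS.inf_le {p : L} (hp : p ∈ SpecS L) {a b : L} (h : a ⊓ b ≤ p) :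
    a ≤ p ∨ b ≤ p := by
  have h1 : p = (p ⊔ a) ⊓ (p ⊔ b) := by
    rw [← sup_inf_left, sup_eq_left.mpr h]
  rcases hp.2 _ _ h1 with h2 | h2
  · exact Or.inl (by rw [h2]; exact le_sup_right)
  · exact Or.inr (by rw [h2]; exact le_sup_right)

lemma DeltaS_bot : DeltaS (⊥ : L) = ∅ := by
  ext p; simp [DeltaS]

lemma DeltaS_top : DeltaS (⊤ : L) = univ := by
  ext p; simpa [DeltaS, top_le_iff] using p.2.1

lemma DeltaS_inf (a b : L) : DeltaS (a ⊓ b) = DeltaS a ∩ DeltaS b := by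
  ext p
  constructor
  · intro hp
    constructor <;> · intro hle; exact hp (le_trans (by simp) hle)
  · rintro ⟨h1, h2⟩ hle
    rcases SpecS.inf_le p.2 hle with h | h
    · exact h1 h
    · exact h2 h

lemma DeltaS_sup (a b : L) : DeltaS (a ⊔ b) = DeltaS a ∪ DeltaS b := by
  ext p
  constructor
  · intro hp
    by_cases ha : a ≤ (p : L)
    · exact Or.inr fun hb => hp (sup_le ha hb)
    · exact Or.inl ha
  · rintro (h | h) hle
    · exact h (le_trans le_sup_left hle)
    · exact h (le_trans le_sup_right hle)

lemma DeltaS_sSup (S : Set L) : DeltaS (sSup S) = ⋃ a ∈ S, DeltaS a := by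
  ext p
  simp only [DeltaS, mem_setOf_eq, mem_iUnion, sSup_le_iff, not_forall]

/-- The hull-kernel topology on the spectrum of a frame: the open sets are
exactly the sets of the form `DeltaS a`. -/
def specTop (L : Type u) [Order.Frame L] : TopologicalSpace (SpecS L) where
  IsOpen U := U ∈ Set.range (DeltaS (L := L))
  isOpen_univ := ⟨⊤, DeltaS_top⟩
  isOpen_inter := by
    rintro _ _ ⟨a, rfl⟩ ⟨b, rfl⟩
    exact ⟨a ⊓ b, DeltaS_inf a b⟩
  isOpen_sUnion := by
    intro S hS
    refine ⟨sSup {a | DeltaS a ∈ S}, ?_⟩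
    rw [DeltaS_sSup]
    apply Set.Subset.antisymm
    · intro p hp
      simp only [mem_iUnion] at hp ⊢
      obtain ⟨a, ha, hpa⟩ := hp
      exact ⟨_, ha, hpa⟩
    · intro p hp
      rcases hp with ⟨U, hU, hpU⟩
      obtain ⟨a, rfl⟩ := hS U hU
      simp only [mem_iUnion]
      exact ⟨a, hU, hpU⟩

/-! ### Right Galois adjoints -/

/-- The right Galois adjoint of a map between complete lattices. -/
def rAdj [CompleteLattice M] [CompleteLattice L] (h : L → M) : M → L :=
  fun m => sSup {l | h l ≤ m}

lemma gc_rAdj (h : FrameHom L M) : GaloisConnection ⇑h (rAdj ⇑h) := by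
  intro l m
  constructor
  · intro hl; exact le_sSup hl
  · intro hl
    calc h l ≤ h (rAdj (⇑h) m) := OrderHomClass.mono h hl
      _ ≤ m := by
          rw [rAdj, map_sSup]
          apply sSup_le
          rintro _ ⟨l', hl', rfl⟩
          exact hl'

lemma rAdj_id : rAdj (id : L → L) = id := by
  funext m
  exact le_antisymm (sSup_le fun _ h => h) (le_sSup le_rfl)

lemma rAdj_mem_SpecS (h : FrameHom L M) {p : M} (hp : p ∈ SpecS M) :
    rAdj ⇑h p ∈ SpecS L := by
  have gc := gc_rAdj h
  constructor
  · intro htop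
    apply hp.1
    rw [top_le_iff.symm]
    have : h ⊤ ≤ p := (gc ⊤ p).mpr (htop ▸ le_rfl)
    simpa using this
  · intro a b hab
    have hle : h a ⊓ h b ≤ p := by
      rw [← map_inf]
      exact (gc _ p).mpr (le_of_eq hab.symm)
    have h1 : rAdj ⇑h p ≤ a := hab ▸ inf_le_left
    have h2 : rAdj ⇑h p ≤ b := hab ▸ inf_le_right
    rcases SpecS.inf_le hp hle with hc | hc
    · exact Or.inl (le_antisymm h1 ((gc a p).mp hc))
    · exact Or.inr (le_antisymm h2 ((gc b p).mp hc))

/-! ### Way-below, continuous and spatial frames -/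

/-- `b` is way below `a`. -/
def WayBelow (b a : L) : Prop :=
  ∀ D : Set L, D.Nonempty → DirectedOn (· ≤ ·) D → a ≤ sSup D → ∃ d ∈ D, b ≤ d

/-- A continuous frame. -/
def IsContinuousFrame (L : Type u) [Order.Frame L] : Prop :=
  ∀ a : L, a = sSup {b | WayBelow b a}

/-- A spatial frame: every element is a meet of primes. -/
def IsSpatialFrame (L : Type u) [Order.Frame L] : Prop :=
  ∀ a : L, ∃ T ⊆ SpecS L, a = sInf T

/-! ### Dominating and compatible homomorphisms -/

/-- `h` is dominating with respect to the designated sublattices. -/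
def Dominating (sL : Set L) (sM : Set M) (h : L → M) : Prop :=
  ∀ m ∈ sM, ∃ l ∈ sL, h l ⊓ m = m

/-- `h` is compatible with respect to the designated sublattices. -/
def Compatible (sL : Set L) (sM : Set M) (h : L → M) : Prop :=
  ∀ l ∈ sL, ∀ m ∈ sM, h l ⊓ m ∈ sM



/-! ### Locally small spaces -/

/-- A locally small space: a set together with a smopology. -/
structure LSS : Type (u + 1) where
  X : Type u
  L : Set (Set X)
  empty_mem : ∅ ∈ L
  inter_mem : ∀ {A B : Set X}, A ∈ L → B ∈ L → A ∩ B ∈ L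
  union_mem : ∀ {A B : Set X}, A ∈ L → B ∈ L → A ∪ B ∈ L
  covers : ∀ x : X, ∃ A ∈ L, x ∈ A

namespace LSS

/-- The weakly open sets: unions of subfamilies of the smopology. -/
def wo (S : LSS.{u}) : Set (Set S.X) := {U | ∃ F ⊆ S.L, U = ⋃₀ F}

lemma mem_wo_iff {S : LSS.{u}} {U : Set S.X} :
    U ∈ S.wo ↔ ∀ x ∈ U, ∃ A ∈ S.L, x ∈ A ∧ A ⊆ U := by
  constructor
  · rintro ⟨F, hF, rfl⟩ x hx
    obtain ⟨A, hA, hxA⟩ := hx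
    exact ⟨A, hF hA, hxA, fun y hy => ⟨A, hA, hy⟩⟩
  · intro h
    refine ⟨{A | A ∈ S.L ∧ A ⊆ U}, fun A hA => hA.1, ?_⟩
    apply Set.Subset.antisymm
    · intro x hx
      obtain ⟨A, hA, hxA, hAU⟩ := h x hx
      exact ⟨A, ⟨hA, hAU⟩, hxA⟩
    · rintro x ⟨A, ⟨_, hAU⟩, hxA⟩
      exact hAU hxA

lemma L_subset_wo (S : LSS.{u}) : S.L ⊆ S.wo := by
  intro A hA
  exact ⟨{A}, by simpa using hA, by simp⟩

/-- The topology of weakly open sets. -/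
def top (S : LSS.{u}) : TopologicalSpace S.X where
  IsOpen U := U ∈ S.wo
  isOpen_univ := mem_wo_iff.mpr fun x _ => by
    obtain ⟨A, hA, hxA⟩ := S.covers x
    exact ⟨A, hA, hxA, subset_univ A⟩
  isOpen_inter := by
    intro U V hU hV
    rw [mem_wo_iff] at hU hV ⊢
    rintro x ⟨hxU, hxV⟩
    obtain ⟨A, hA, hxA, hAU⟩ := hU x hxU
    obtain ⟨B, hB, hxB, hBV⟩ := hV x hxV
    exact ⟨A ∩ B, S.inter_mem hA hB, ⟨hxA, hxB⟩, inter_subset_inter hAU hBV⟩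
  isOpen_sUnion := by
    intro F hF
    rw [mem_wo_iff]
    rintro x ⟨U, hU, hxU⟩
    obtain ⟨A, hA, hxA, hAU⟩ := mem_wo_iff.mp (hF U hU) x hxU
    exact ⟨A, hA, hxA, hAU.trans (subset_sUnion_of_mem hU)⟩

/-- The frame of weakly open sets. -/
abbrev O (S : LSS.{u}) : Type u := @Opens S.X S.top

noncomputable instance (S : LSS.{u}) : Order.Frame S.O :=
  letI := S.top
  inferInstanceAs (Order.Frame (Opens S.X))

lemma isOpen_iff_mem_wo {S : LSS.{u}} {U : Set S.X} :
    @IsOpen _ S.top U ↔ U ∈ S.wo := Iff.rfl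

/-- The exterior of a point: the union of all weakly open sets omitting it. -/
def extSet (S : LSS.{u}) (x : S.X) : Set S.X := ⋃₀ {U ∈ S.wo | x ∉ U}

lemma extSet_mem_wo (S : LSS.{u}) (x : S.X) : S.extSet x ∈ S.wo := by
  rw [mem_wo_iff]
  rintro y ⟨U, ⟨hUwo, hxU⟩, hyU⟩
  obtain ⟨A, hA, hyA, hAU⟩ := mem_wo_iff.mp hUwo y hyU
  exact ⟨A, hA, hyA, hAU.trans (subset_sUnion_of_mem ⟨hUwo, hxU⟩)⟩

/-- The exterior of a point, as an open set. -/
def extO (S : LSS.{u}) (x : S.X) : S.O :=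
  letI := S.top
  ⟨S.extSet x, S.extSet_mem_wo x⟩

end LSS

/-! ### Bounded and continuous maps -/

/-- `f` is a bounded map with respect to the given smopologies. -/
def IsBdd {X Y : Type*} (LX : Set (Set X)) (LY : Set (Set Y)) (f : X → Y) : Prop :=
  ∀ W ∈ LX, ∃ V ∈ LY, W ⊆ f ⁻¹' V

/-- `f` is a continuous map of locally small spaces. -/
def IsCt {X Y : Type*} (LX : Set (Set X)) (LY : Set (Set Y)) (f : X → Y) : Prop :=
  ∀ V ∈ LY, ∀ W ∈ LX, f ⁻¹' V ∩ W ∈ LX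



/-! ### Frames with designated sup-generating sublattices -/

/-- A frame together with a sup-generating sublattice with zero. -/
structure FrmS : Type (u + 1) where
  L : Type u
  [str : Order.Frame L]
  s : Set L
  bot_mem : ⊥ ∈ s
  inf_mem : ∀ {a b : L}, a ∈ s → b ∈ s → a ⊓ b ∈ s
  sup_mem : ∀ {a b : L}, a ∈ s → b ∈ s → a ⊔ b ∈ s
  supGen : ∀ a : L, ∃ T ⊆ s, a = sSup T

attribute [instance] FrmS.str

variable {L M N : Type u} [Order.Frame L] [Order.Frame M] [Order.Frame N]

lemma Dominating.compFH {sL : Set L} {sM : Set M} {sN : Set N}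
    (h : FrameHom L M) (k : FrameHom M N)
    (hd : Dominating sL sM ⇑h) (kd : Dominating sM sN ⇑k)
    (hc : Compatible sL sM ⇑h) : Dominating sL sN ⇑(k.comp h) := by
  intro n hn
  obtain ⟨m, hm, hkm⟩ := kd n hn
  obtain ⟨l, hl, hhl⟩ := hd m hm
  refine ⟨l, hl, ?_⟩
  have h1 : (k.comp h) l ⊓ n = k (h l) ⊓ (k m ⊓ n) := by rw [hkm]; rfl
  rw [h1, ← inf_assoc, ← map_inf, hhl, hkm]

lemma Compatible.compFH {sL : Set L} {sM : Set M} {sN : Set N}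
    (h : FrameHom L M) (k : FrameHom M N)
    (hcH : Compatible sL sM ⇑h) (kd : Dominating sM sN ⇑k)
    (kc : Compatible sM sN ⇑k) : Compatible sL sN ⇑(k.comp h) := by
  intro l hl n hn
  obtain ⟨m, hm, hkm⟩ := kd n hn
  have h1 : h l ⊓ m ∈ sM := hcH l hl m hm
  have h2 : k (h l ⊓ m) ⊓ n ∈ sN := kc _ h1 n hn
  have h3 : k (h l ⊓ m) ⊓ n = (k.comp h) l ⊓ n := by
    rw [map_inf, inf_assoc, hkm]; rfl
  rwa [h3] at h2

lemma rAdj_comp (h : FrameHom L M) (k : FrameHom M N) :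
    rAdj ⇑(k.comp h) = rAdj ⇑h ∘ rAdj ⇑k := by
  funext n
  exact (gc_rAdj (k.comp h)).u_unique ((gc_rAdj h).compose (gc_rAdj k))
    (fun a => rfl)

/-! ### The categories LSS, FrmSCat and LocS -/

/-- Bounded continuous maps: the morphisms of `LSS`. -/
abbrev LSSHom (S T : LSS.{u}) : Type u :=
  {f : S.X → T.X // IsBdd S.L T.L f ∧ IsCt S.L T.L f}

instance : Category LSS.{u} where
  Hom := LSSHom
  id S := ⟨id, fun W hW => ⟨W, hW, fun _ hx => hx⟩,
    fun V hV W hW => S.inter_mem hV hW⟩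
  comp {S T U} f g := ⟨g.1 ∘ f.1,
    fun W hW => by
      obtain ⟨V, hV, hWV⟩ := f.2.1 W hW
      obtain ⟨Z, hZ, hVZ⟩ := g.2.1 V hV
      exact ⟨Z, hZ, fun x hx => hVZ (hWV hx)⟩,
    fun Z hZ W hW => by
      obtain ⟨V, hV, hWV⟩ := f.2.1 W hW
      have h1 : g.1 ⁻¹' Z ∩ V ∈ T.L := g.2.2 Z hZ V hV
      have h2 : f.1 ⁻¹' (g.1 ⁻¹' Z ∩ V) ∩ W ∈ S.L := f.2.2 _ h1 W hW
      have h3 : (g.1 ∘ f.1) ⁻¹' Z ∩ W = f.1 ⁻¹' (g.1 ⁻¹' Z ∩ V) ∩ W := by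
        ext x
        constructor
        · rintro ⟨hxZ, hxW⟩; exact ⟨⟨hxZ, hWV hxW⟩, hxW⟩
        · rintro ⟨⟨hxZ, _⟩, hxW⟩; exact ⟨hxZ, hxW⟩
      rw [h3]; exact h2⟩
  id_comp f := Subtype.ext rfl
  comp_id f := Subtype.ext rfl
  assoc f g h := Subtype.ext rfl

/-- The category of frames with sup-generating sublattices and dominating
compatible frame homomorphisms. -/
structure FrmSCat : Type (u + 1) where
  P : FrmS.{u}

/-- Dominating compatible frame homomorphisms: the morphisms of `FrmSCat`. -/
abbrev FrmSHom (A B : FrmSCat.{u}) : Type u :=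
  {h : FrameHom A.P.L B.P.L //
    Dominating A.P.s B.P.s ⇑h ∧ Compatible A.P.s B.P.s ⇑h}

instance : Category FrmSCat.{u} where
  Hom := FrmSHom
  id A := ⟨FrameHom.id _, fun m hm => ⟨m, hm, inf_idem m⟩,
    fun l hl m hm => A.P.inf_mem hl hm⟩
  comp {A B C} h k := ⟨k.1.comp h.1,
    Dominating.compFH h.1 k.1 h.2.1 k.2.1 h.2.2,
    Compatible.compFH h.1 k.1 h.2.2 k.2.1 k.2.2⟩
  id_comp f := Subtype.ext (by ext a; rfl)
  comp_id f := Subtype.ext (by ext a; rfl)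
  assoc f g h := Subtype.ext (by ext a; rfl)

/-- The category of frames with sup-generating sublattices and special localic
maps (right Galois adjoints of dominating compatible frame homomorphisms). -/
structure LocS : Type (u + 1) where
  P : FrmS.{u}

/-- Special localic maps: the morphisms of `LocS`. -/
abbrev LocSHom (A B : LocS.{u}) : Type u :=
  {g : A.P.L → B.P.L // ∃ h : FrameHom B.P.L A.P.L,
    Dominating B.P.s A.P.s ⇑h ∧ Compatible B.P.s A.P.s ⇑h ∧ g = rAdj ⇑h}

instance : Category LocS.{u} where
  Hom := LocSHom
  id A := ⟨id, FrameHom.id _, fun m hm => ⟨m, hm, inf_idem m⟩,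
    fun l hl m hm => A.P.inf_mem hl hm, by
      have h1 : ⇑(FrameHom.id A.P.L) = (id : A.P.L → A.P.L) := rfl
      rw [h1, rAdj_id]⟩
  comp {A B C} f g := ⟨g.1 ∘ f.1, by
    obtain ⟨h1, h1d, h1c, hf⟩ := f.2
    obtain ⟨h2, h2d, h2c, hg⟩ := g.2
    refine ⟨h1.comp h2, Dominating.compFH h2 h1 h2d h1d h2c,
      Compatible.compFH h2 h1 h2c h1d h1c, ?_⟩
    rw [hf, hg, rAdj_comp]⟩
  id_comp f := Subtype.ext rfl
  comp_id f := Subtype.ext rfl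
  assoc f g h := Subtype.ext rfl

/-! ### The functor Ω : LSS ⥤ LocS -/

/-- The object part of `Ω`. -/
noncomputable abbrev OmegaObj (S : LSS.{u}) : FrmS.{u} where
  L := S.O
  s := {U : S.O | (U : Set S.X) ∈ S.L}
  bot_mem := by
    letI := S.top
    show ((⊥ : Opens S.X) : Set S.X) ∈ S.L
    simpa using S.empty_mem
  inf_mem := by
    letI := S.top
    intro a b ha hb
    show ((a ⊓ b : Opens S.X) : Set S.X) ∈ S.L
    rw [Opens.coe_inf]
    exact S.inter_mem ha hb
  sup_mem := by
    letI := S.top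
    intro a b ha hb
    show ((a ⊔ b : Opens S.X) : Set S.X) ∈ S.L
    rw [Opens.coe_sup]
    exact S.union_mem ha hb
  supGen := by
    letI := S.top
    intro U
    refine ⟨{V : Opens S.X | (V : Set S.X) ∈ S.L ∧ (V : Set S.X) ⊆ (U : Set S.X)},
      fun V hV => hV.1, ?_⟩
    apply Opens.ext
    rw [Opens.coe_sSup]
    apply Set.Subset.antisymm
    · intro x hx
      obtain ⟨A, hA, hxA, hAU⟩ := LSS.mem_wo_iff.mp U.2 x hx
      exact Set.mem_biUnion (show (⟨A, S.L_subset_wo hA⟩ : Opens S.X) ∈ _ from ⟨hA, hAU⟩) hxA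
    · intro x hx
      simp only [Set.mem_iUnion] at hx
      obtain ⟨V, ⟨⟨_, hVU⟩, hxV⟩⟩ := hx
      exact hVU hxV

lemma contW {S T : LSS.{u}} (f : S.X → T.X) (hc : IsCt S.L T.L f) :
    @Continuous S.X T.X S.top T.top f := by
  letI := S.top; letI := T.top
  rw [continuous_def]
  intro V hV
  rw [LSS.isOpen_iff_mem_wo] at hV ⊢
  rw [LSS.mem_wo_iff]
  intro x hx
  obtain ⟨A, hA, hfA, hAV⟩ := LSS.mem_wo_iff.mp hV (f x) hx
  obtain ⟨W, hW, hxW⟩ := S.covers x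
  exact ⟨f ⁻¹' A ∩ W, hc A hA W hW, ⟨hfA, hxW⟩, fun y hy => hAV hy.1⟩

/-- The preimage frame homomorphism `L^wo f` of a bounded continuous map. -/
noncomputable def preimFH {S T : LSS.{u}} (f : LSSHom S T) : FrameHom T.O S.O :=
  @Opens.comap S.X T.X S.top T.top (@ContinuousMap.mk S.X T.X S.top T.top f.1 (contW f.1 f.2.2))

lemma preimFH_coe {S T : LSS.{u}} (f : LSSHom S T) (V : T.O) :
    ((preimFH f V : S.O) : Set S.X) = f.1 ⁻¹' (V : Set T.X) := by
  letI := S.top; letI := T.top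
  exact Opens.coe_comap _ V

/-- The morphism part of `Ω`. -/
noncomputable def OmegaMap {S T : LSS.{u}} (f : LSSHom S T) :
    LocSHom ⟨OmegaObj S⟩ ⟨OmegaObj T⟩ :=
  ⟨rAdj ⇑(preimFH f), preimFH f,
    by
      letI := S.top
      letI := T.top
      intro m hm
      obtain ⟨V, hV, hmV⟩ := f.2.1 (m : Set S.X) hm
      refine ⟨⟨V, T.L_subset_wo hV⟩, hV, ?_⟩
      apply Opens.ext
      show ((preimFH f ⟨V, _⟩ ⊓ m : Opens S.X) : Set S.X) = (m : Set S.X)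
      rw [Opens.coe_inf, preimFH_coe]
      exact Set.inter_eq_self_of_subset_right hmV,
    by
      letI := S.top
      intro l hl m hm
      show ((preimFH f l ⊓ m : Opens S.X) : Set S.X) ∈ S.L
      rw [Opens.coe_inf, preimFH_coe]
      exact f.2.2 _ hl _ hm,
    rfl⟩

lemma preimFH_id (S : LSS.{u}) : preimFH (𝟙 S) = FrameHom.id S.O := by
  apply DFunLike.ext
  intro V
  letI := S.top
  apply Opens.ext
  rw [preimFH_coe]
  rfl

lemma preimFH_comp {S T U : LSS.{u}} (f : S ⟶ T) (g : T ⟶ U) :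
    preimFH (f ≫ g) = (preimFH f).comp (preimFH g) := by
  apply DFunLike.ext
  intro V
  letI := S.top
  apply Opens.ext
  rw [preimFH_coe]
  show _ = ((preimFH f (preimFH g V) : S.O) : Set S.X)
  rw [preimFH_coe, preimFH_coe]
  rfl

/-- The spectral functor `Ω : LSS ⥤ LocS`. -/
noncomputable def Omega : LSS.{u} ⥤ LocS.{u} where
  obj S := ⟨OmegaObj S⟩
  map f := OmegaMap f
  map_id S := by
    apply Subtype.ext
    show rAdj ⇑(preimFH (𝟙 S)) = id
    rw [preimFH_id]
    have h1 : ⇑(FrameHom.id S.O) = (id : S.O → S.O) := rfl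
    rw [h1, rAdj_id]
  map_comp {S T U} f g := by
    apply Subtype.ext
    show rAdj ⇑(preimFH (f ≫ g)) = rAdj ⇑(preimFH g) ∘ rAdj ⇑(preimFH f)
    rw [preimFH_comp, rAdj_comp]

/-! ### The functor Σ : LocS ⥤ LSS -/

/-- The object part of `Σ`: the spectrum with the smopology `Δ(L_s)`. -/
abbrev SigmaObj (P : LocS.{u}) : LSS.{u} where
  X := ↥(SpecS P.P.L)
  L := DeltaS '' P.P.s
  empty_mem := ⟨⊥, P.P.bot_mem, DeltaS_bot⟩
  inter_mem := by
    rintro _ _ ⟨a, ha, rfl⟩ ⟨b, hb, rfl⟩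
    exact ⟨a ⊓ b, P.P.inf_mem ha hb, DeltaS_inf a b⟩
  union_mem := by
    rintro _ _ ⟨a, ha, rfl⟩ ⟨b, hb, rfl⟩
    exact ⟨a ⊔ b, P.P.sup_mem ha hb, DeltaS_sup a b⟩
  covers := by
    intro p
    obtain ⟨T, hT, hsup⟩ := P.P.supGen ⊤
    by_contra hcon
    push_neg at hcon
    apply p.2.1
    apply top_le_iff.mp
    rw [hsup]
    apply sSup_le
    intro a ha
    by_contra hle
    exact (hcon (DeltaS a) ⟨a, hT ha, rfl⟩) hle

/-- The morphism part of `Σ`: the restriction of a special localic map to the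
spectra. -/
def SigmaMap {A B : LocS.{u}} (g : LocSHom A B) :
    LSSHom (SigmaObj A) (SigmaObj B) :=
  ⟨fun p => ⟨g.1 p.1, by
      obtain ⟨h, _, _, hg⟩ := g.2
      rw [hg]
      exact rAdj_mem_SpecS h p.2⟩,
    by
      rintro _ ⟨a, ha, rfl⟩
      obtain ⟨h, hdom, hcomp, hg⟩ := g.2
      obtain ⟨l, hl, hla⟩ := hdom a ha
      refine ⟨DeltaS l, ⟨l, hl, rfl⟩, ?_⟩
      intro p hpa
      show ¬ l ≤ g.1 p.1
      intro hle
      rw [hg] at hle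
      have h1 : h l ≤ (p : A.P.L) := (gc_rAdj h l p.1).mpr hle
      exact hpa (hla ▸ le_trans inf_le_left h1),
    by
      rintro _ ⟨d, hd, rfl⟩ _ ⟨e, he, rfl⟩
      obtain ⟨h, hdom, hcomp, hg⟩ := g.2
      refine ⟨h d ⊓ e, hcomp d hd e he, ?_⟩
      ext p
      constructor
      · intro hle
        constructor
        · show ¬ d ≤ g.1 p.1
          intro hdg
          rw [hg] at hdg
          have h4 : h d ≤ (p : A.P.L) := (gc_rAdj h d p.1).mpr hdg
          exact hle (le_trans inf_le_left h4)
        · intro heg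
          exact hle (le_trans inf_le_right heg)
      · rintro ⟨h1, h2⟩ hle
        rcases SpecS.inf_le p.2 hle with hc | hc
        · apply h1
          show d ≤ g.1 p.1
          rw [hg]
          exact (gc_rAdj h d p.1).mp hc
        · exact h2 hc⟩

/-- The spectral functor `Σ : LocS ⥤ LSS`. -/
def SigmaF : LocS.{u} ⥤ LSS.{u} where
  obj P := SigmaObj P
  map g := SigmaMap g
  map_id A := Subtype.ext (funext fun p => Subtype.ext rfl)
  map_comp f g := Subtype.ext (funext fun p => Subtype.ext rfl)

/-!
The adjunction is given by its unit and counit. The unit sends a point `x` of a locally small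
space to its exterior, the largest weakly open set omitting `x`, which is a prime of `L_X^wo`
and satisfies `U ≤ ext x ↔ x ∉ U`; the counit is the right adjoint of `a ↦ Δ(a)`, a dominating
compatible frame homomorphism `L → Ω(Σ L)`. Both triangle identities and both naturality squares
reduce, via the Galois connection `h l ≤ m ↔ l ≤ h_* m`, to the two identities
`ext⁻¹(Δ U) = U` and `Δ(a) ≤ ext p ↔ a ≤ p`.
-/

section Adjunction

attribute [local instance] LSS.top

variable {S T : LSS.{u}} {A B : LocS.{u}}

lemma le_rAdj_iff (h : FrameHom L M) {l : L} {m : M} : l ≤ rAdj ⇑h m ↔ h l ≤ m :=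
  (gc_rAdj h l m).symm

lemma mem_SpecS_of_inf_le {p : L} (hp : p ≠ ⊤)
    (h : ∀ a b : L, a ⊓ b ≤ p → a ≤ p ∨ b ≤ p) : p ∈ SpecS L := by
  refine ⟨hp, fun a b hab => ?_⟩
  rcases h a b hab.ge with ha | hb
  · exact Or.inl (le_antisymm (hab ▸ inf_le_left) ha)
  · exact Or.inr (le_antisymm (hab ▸ inf_le_right) hb)

namespace LSS

lemma le_extO_iff {x : S.X} {U : S.O} : U ≤ S.extO x ↔ x ∉ (U : Set S.X) := by
  constructor
  · rintro hU hx
    obtain ⟨V, ⟨-, hxV⟩, hV⟩ := hU hx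
    exact hxV hV
  · exact fun hx y hy => ⟨U, ⟨U.2, hx⟩, hy⟩

lemma extO_mem_SpecS (x : S.X) : S.extO x ∈ SpecS S.O := by
  refine mem_SpecS_of_inf_le (fun htop => le_extO_iff.mp htop.ge trivial) fun U V hUV => ?_
  simp only [le_extO_iff, Opens.coe_inf] at hUV ⊢
  tauto

def extPt (S : LSS.{u}) (x : S.X) : SpecS S.O := ⟨S.extO x, S.extO_mem_SpecS x⟩

lemma extPt_preimage_DeltaS (U : S.O) : S.extPt ⁻¹' DeltaS U = U := by
  ext x
  exact le_extO_iff.not.trans not_not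

def extHom (S : LSS.{u}) : S ⟶ SigmaObj ⟨OmegaObj S⟩ :=
  ⟨S.extPt,
    fun W hW => ⟨DeltaS ⟨W, S.L_subset_wo hW⟩, ⟨_, hW, rfl⟩,
      (S.extPt_preimage_DeltaS ⟨W, S.L_subset_wo hW⟩).ge⟩,
    by
      rintro _ ⟨U, hU, rfl⟩ W hW
      rw [extPt_preimage_DeltaS]
      exact S.inter_mem hU hW⟩

lemma rAdj_preimFH_extO (k : S ⟶ T) (x : S.X) :
    rAdj ⇑(preimFH k) (S.extO x) = T.extO (k.1 x) := by
  refine eq_of_forall_le_iff fun V => ?_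
  rw [le_rAdj_iff, le_extO_iff, le_extO_iff, preimFH_coe]
  rfl

lemma extHom_naturality (k : S ⟶ T) : k ≫ T.extHom = S.extHom ≫ SigmaMap (OmegaMap k) := by
  apply Subtype.ext
  funext x
  apply Subtype.ext
  exact (rAdj_preimFH_extO k x).symm

end LSS

namespace LocS

lemma DeltaS_mem_wo (a : A.P.L) : DeltaS a ∈ (SigmaObj A).wo := by
  obtain ⟨T, hT, rfl⟩ := A.P.supGen a
  exact ⟨DeltaS '' T, image_mono hT, by rw [DeltaS_sSup, sUnion_image]⟩

def deltaFH (A : LocS.{u}) : FrameHom A.P.L (SigmaObj A).O :=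
  letI := (SigmaObj A).top
  { toFun := fun a => ⟨DeltaS a, DeltaS_mem_wo a⟩
    map_inf' := fun a b => Opens.ext (DeltaS_inf a b)
    map_top' := Opens.ext DeltaS_top
    map_sSup' := fun T => Opens.ext (by rw [Opens.coe_sSup, biUnion_image]; exact DeltaS_sSup T) }

lemma coe_deltaFH (a : A.P.L) :
    letI := (SigmaObj A).top; (A.deltaFH a : Set (SpecS A.P.L)) = DeltaS a := rfl

noncomputable def counitHom (A : LocS.{u}) : (⟨OmegaObj (SigmaObj A)⟩ : LocS) ⟶ A :=
  ⟨rAdj ⇑A.deltaFH, A.deltaFH,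
    by
      let := (SigmaObj A).top
      rintro m ⟨a, ha, hm⟩
      refine ⟨a, ha, Opens.ext ?_⟩
      rw [Opens.coe_inf, coe_deltaFH, ← hm, inter_self],
    by
      let := (SigmaObj A).top
      rintro l hl m ⟨b, hb, hm⟩
      refine ⟨l ⊓ b, A.P.inf_mem hl hb, ?_⟩
      rw [Opens.coe_inf, coe_deltaFH, ← hm, DeltaS_inf],
    rfl⟩

lemma SigmaMap_preimage_DeltaS (t : A ⟶ B) (h : FrameHom B.P.L A.P.L) (ht : t.1 = rAdj ⇑h)
    (b : B.P.L) : (SigmaMap t).1 ⁻¹' DeltaS b = DeltaS (h b) := by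
  ext p
  show ¬ b ≤ t.1 p.1 ↔ ¬ h b ≤ p.1
  rw [ht, le_rAdj_iff]

lemma counitHom_naturality (t : A ⟶ B) :
    OmegaMap (SigmaMap t) ≫ B.counitHom = A.counitHom ≫ t := by
  obtain ⟨h, -, -, ht⟩ := t.2
  have hfun : (preimFH (SigmaMap t)).comp B.deltaFH = A.deltaFH.comp h := by
    let := (SigmaObj A).top
    refine DFunLike.ext _ _ fun b => Opens.ext ?_
    rw [FrameHom.comp_apply, preimFH_coe]
    exact SigmaMap_preimage_DeltaS t h ht b
  apply Subtype.ext
  show rAdj ⇑B.deltaFH ∘ rAdj ⇑(preimFH (SigmaMap t)) = t.1 ∘ rAdj ⇑A.deltaFH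
  rw [ht, ← rAdj_comp, ← rAdj_comp, hfun]

lemma rAdj_deltaFH_extO (p : SpecS A.P.L) : rAdj ⇑A.deltaFH ((SigmaObj A).extO p) = p := by
  refine eq_of_forall_le_iff fun a => ?_
  rw [le_rAdj_iff, LSS.le_extO_iff, coe_deltaFH]
  exact not_not

lemma extHom_comp_SigmaMap_counitHom : (SigmaObj A).extHom ≫ SigmaMap A.counitHom = 𝟙 _ :=
  Subtype.ext <| funext fun p => Subtype.ext (rAdj_deltaFH_extO p)

lemma OmegaMap_extHom_comp_counitHom :
    OmegaMap S.extHom ≫ counitHom ⟨OmegaObj S⟩ = 𝟙 (⟨OmegaObj S⟩ : LocS) := by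
  have hid : (preimFH S.extHom).comp (deltaFH ⟨OmegaObj S⟩) = FrameHom.id S.O :=
    DFunLike.ext _ _ fun U => Opens.ext ((preimFH_coe _ _).trans (S.extPt_preimage_DeltaS U))
  apply Subtype.ext
  show rAdj ⇑(deltaFH ⟨OmegaObj S⟩) ∘ rAdj ⇑(preimFH S.extHom) = id
  rw [← rAdj_comp, hid]
  exact rAdj_id

end LocS

end Adjunction

/-- **The spectral adjunction**: the functor `Ω : LSS ⥤ LocS` is left adjoint to
the functor `Σ : LocS ⥤ LSS`. -/
theorem spectral_adjunction : Nonempty (Omega.{u} ⊣ SigmaF.{u}) :=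
  ⟨{ unit := { app := LSS.extHom, naturality := fun _ _ k => LSS.extHom_naturality k }
     counit := { app := LocS.counitHom, naturality := fun _ _ t => LocS.counitHom_naturality t }
     left_triangle_components := fun _ => LocS.OmegaMap_extHom_comp_counitHom
     right_triangle_components := fun _ => LocS.extHom_comp_SigmaMap_counitHom }⟩
end

section
/- Let L be a continuous frame and L_s a sublattice of L containing 0 that sup-generates L. Then (Spec(L), Δ_L(L_s)) is a locally small space whose topology of weakly open sets is Δ_L(L), and the topological space (Spec(L), Δ_L(L)) is sober and locally compact. -/
open Set TopologicalSpace

universe u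



variable {L M N : Type u} [Order.Frame L] [Order.Frame M] [Order.Frame N]

/-- The weakly open sets generated by a family: unions of subfamilies. -/
def woF {X : Type u} (Lx : Set (Set X)) : Set (Set X) := {U | ∃ F ⊆ Lx, U = ⋃₀ F}

/-! Everything except local compactness holds for the spectrum of an arbitrary frame: the closed
sets are the hulls `(DeltaS a)ᶜ`, the closure of a point `p` is the hull of `p`, and the meet of an
irreducible closed set is prime. For local compactness, if `b ≪ a` then interpolation yields a chain
`a = Y₀ ≫ Y₁ ≫ ⋯` above `b` generating a Scott-open filter `F` with `a ∈ F ⊆ ↑b`. The primes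
outside `F` form a set between `DeltaS b` and `DeltaS a`, and it is compact: a maximal element of
`Fᶜ` above `u ∉ F` is prime, so the supremum of an open cover `DeltaS dᵢ` of that set lies in `F`,
and Scott-openness of `F` yields a finite subcover. -/

lemma mem_SpecS_iff {p : L} :
    p ∈ SpecS L ↔ p ≠ ⊤ ∧ ∀ a b : L, a ⊓ b ≤ p → a ≤ p ∨ b ≤ p := by
  refine ⟨fun hp => ⟨hp.1, fun _ _ => SpecS.inf_le hp⟩, fun ⟨hp, hprime⟩ => ⟨hp, ?_⟩⟩
  rintro a b rfl
  exact (hprime a b le_rfl).imp (le_antisymm inf_le_left) (le_antisymm inf_le_right)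

lemma DeltaS_finsetSup {ι : Type*} (t : Finset ι) (d : ι → L) :
    DeltaS (t.sup d) = ⋃ i ∈ t, DeltaS (d i) := by
  ext p
  simp [DeltaS, Finset.sup_le_iff]

lemma woF_DeltaS_image_eq_range {s : Set L} (hgen : ∀ a : L, ∃ T ⊆ s, a = sSup T) :
    woF (DeltaS '' s) = range (DeltaS (L := L)) := by
  refine Subset.antisymm ?_ ?_
  · rintro _ ⟨F, hF, rfl⟩
    exact (specTop L).isOpen_sUnion F fun U hU => (image_subset_range _ _) (hF hU)
  · rintro _ ⟨a, rfl⟩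
    obtain ⟨T, hTs, rfl⟩ := hgen a
    exact ⟨DeltaS '' T, image_mono hTs, by rw [DeltaS_sSup, sUnion_image]⟩

section WayBelow

lemma WayBelow.le {a b : L} (h : WayBelow b a) : b ≤ a := by
  obtain ⟨_, rfl, hb⟩ := h {a} (singleton_nonempty a) (directedOn_singleton a) (le_sSup rfl)
  exact hb

lemma WayBelow.mono_left {a b c : L} (hcb : c ≤ b) (h : WayBelow b a) : WayBelow c a :=
  fun D hne hdir hle => (h D hne hdir hle).imp fun _ ⟨hd, hbd⟩ => ⟨hd, hcb.trans hbd⟩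

lemma WayBelow.mono_right {a a' b : L} (h : WayBelow b a) (haa' : a ≤ a') : WayBelow b a' :=
  fun D hne hdir hle => h D hne hdir (haa'.trans hle)

lemma wayBelow_bot (a : L) : WayBelow ⊥ a :=
  fun _ ⟨d, hd⟩ _ _ => ⟨d, hd, bot_le⟩

lemma WayBelow.sup {a b c : L} (hb : WayBelow b a) (hc : WayBelow c a) : WayBelow (b ⊔ c) a := by
  intro D hne hdir hle
  obtain ⟨d₁, hd₁, hb₁⟩ := hb D hne hdir hle
  obtain ⟨d₂, hd₂, hc₂⟩ := hc D hne hdir hle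
  obtain ⟨d, hd, h₁, h₂⟩ := hdir d₁ hd₁ d₂ hd₂
  exact ⟨d, hd, sup_le (hb₁.trans h₁) (hc₂.trans h₂)⟩

end WayBelow

namespace IsContinuousFrame

variable (hcont : IsContinuousFrame L)
include hcont

lemma exists_wayBelow_not_le {a p : L} (h : ¬ a ≤ p) : ∃ b, WayBelow b a ∧ ¬ b ≤ p := by
  by_contra! hle
  exact h ((hcont a).trans_le (sSup_le hle))

lemma exists_wayBelow_wayBelow {a b : L} (h : WayBelow b a) :
    ∃ c, WayBelow b c ∧ WayBelow c a := by
  let S : Set L := {d | ∃ c, WayBelow d c ∧ WayBelow c a}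
  have hdir : DirectedOn (· ≤ ·) S := by
    rintro d₁ ⟨c₁, hd₁, hc₁⟩ d₂ ⟨c₂, hd₂, hc₂⟩
    exact ⟨d₁ ⊔ d₂, ⟨c₁ ⊔ c₂, (hd₁.mono_right le_sup_left).sup (hd₂.mono_right le_sup_right),
      hc₁.sup hc₂⟩, le_sup_left, le_sup_right⟩
  have haS : a ≤ sSup S := by
    refine (hcont a).trans_le (sSup_le fun c hc => (hcont c).trans_le ?_)
    exact sSup_le fun d hd => le_sSup ⟨c, hd, hc⟩
  obtain ⟨d, ⟨c, hdc, hca⟩, hbd⟩ := h S ⟨⊥, ⊥, wayBelow_bot _, wayBelow_bot _⟩ hdir haS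
  exact ⟨c, hdc.mono_left hbd, hca⟩

lemma exists_wayBelow_chain {a b : L} (h : WayBelow b a) :
    ∃ Y : ℕ → L, Y 0 = a ∧ (∀ n, b ≤ Y n) ∧ ∀ n, WayBelow (Y (n + 1)) (Y n) := by
  have step (c : {x : L // WayBelow b x}) : ∃ c' : {x : L // WayBelow b x}, WayBelow c'.1 c.1 :=
    let ⟨c', hbc', hc'c⟩ := hcont.exists_wayBelow_wayBelow c.2
    ⟨⟨c', hbc'⟩, hc'c⟩
  choose f hf using step
  refine ⟨fun n => (f^[n] ⟨a, h⟩).1, rfl, fun n => (f^[n] ⟨a, h⟩).2.le, fun n => ?_⟩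
  simpa only [Function.iterate_succ_apply'] using hf (f^[n] ⟨a, h⟩)

/-- The filter is generated by a chain `a = Y₀ ≫ Y₁ ≫ ⋯` above `b`. -/
lemma exists_pfilter_dirSupInacc {a b : L} (h : WayBelow b a) :
    ∃ F : Order.PFilter L, DirSupInacc (F : Set L) ∧ a ∈ F ∧ ∀ x ∈ F, b ≤ x := by
  obtain ⟨Y, rfl, hbY, hY⟩ := hcont.exists_wayBelow_chain h
  have hanti : Antitone Y := antitone_nat_of_succ_le fun n => (hY n).le
  have hF : Order.IsPFilter {x | ∃ n, Y n ≤ x} := by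
    refine .of_def ⟨Y 0, 0, le_rfl⟩ ?_ fun hxy ⟨n, hn⟩ => ⟨n, hn.trans hxy⟩
    rintro x ⟨m, hm⟩ y ⟨n, hn⟩
    exact ⟨Y (max m n), ⟨_, le_rfl⟩, (hanti (le_max_left m n)).trans hm,
      (hanti (le_max_right m n)).trans hn⟩
  refine ⟨hF.toPFilter, ?_, ⟨0, le_rfl⟩, fun x ⟨n, hn⟩ => (hbY n).trans hn⟩
  rintro D hne hdir c hc ⟨n, hn⟩
  obtain ⟨d, hd, hle⟩ := hY n D hne hdir (hc.sSup_eq ▸ hn)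
  exact ⟨d, hd, n + 1, hle⟩

end IsContinuousFrame

lemma exists_mem_SpecS_le_notMem {F : Order.PFilter L} (hF : DirSupInacc (F : Set L)) {u : L}
    (hu : u ∉ F) : ∃ q ∈ SpecS L, u ≤ q ∧ q ∉ F := by
  have hchain : ∀ c ⊆ {x | x ∉ F}, IsChain (· ≤ ·) c → ∀ y ∈ c,
      ∃ ub ∈ {x | x ∉ F}, ∀ z ∈ c, z ≤ ub := by
    refine fun c hcF hc y hy => ⟨sSup c, fun hsup => ?_, fun z => le_sSup⟩
    obtain ⟨d, hdc, hdF⟩ := hF ⟨y, hy⟩ hc.directedOn (isLUB_sSup c) hsup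
    exact hcF hdc hdF
  obtain ⟨q, huq, hq⟩ := zorn_le_nonempty₀ _ hchain u hu
  refine ⟨q, mem_SpecS_iff.2 ⟨fun htop => hq.1 (htop ▸ Order.PFilter.top_mem), ?_⟩, huq, hq.1⟩
  intro a b hab
  by_contra! hne
  -- by maximality `q ⊔ a, q ⊔ b ∈ F`, and their meet is `q ⊔ (a ⊓ b) = q`
  have hmem (x : L) (hx : ¬ x ≤ q) : q ⊔ x ∈ F := by
    by_contra hqx
    exact hx (le_sup_right.trans (hq.2 hqx le_sup_left))
  have := Order.PFilter.inf_mem (hmem a hne.1) (hmem b hne.2)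
  rw [← sup_inf_left, sup_eq_left.2 hab] at this
  exact hq.1 this

section HullKernelTopology

attribute [local instance] specTop

lemma isOpen_DeltaS (a : L) : IsOpen (DeltaS a) := ⟨a, rfl⟩

lemma closure_singleton_eq_compl_DeltaS (p : SpecS L) : closure {p} = (DeltaS (p : L))ᶜ := by
  refine Subset.antisymm (closure_minimal ?_ (isOpen_DeltaS _).isClosed_compl) fun q hpq => ?_
  · simp [DeltaS]
  · rw [mem_closure_iff]
    rintro _ ⟨c, rfl⟩ hcq
    refine ⟨p, fun hcp => hcq (hcp.trans ?_), rfl⟩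
    simpa [DeltaS] using hpq

lemma t0Space_specTop : T0Space (SpecS L) := by
  refine (t0Space_iff_inseparable _).2 fun p q hpq => ?_
  simp only [inseparable_iff_closure_eq, closure_singleton_eq_compl_DeltaS, compl_inj_iff] at hpq
  have hle (p q : SpecS L) (h : DeltaS (p : L) = DeltaS (q : L)) : (p : L) ≤ q := by
    by_contra hpq
    exact (h ▸ hpq : q ∈ DeltaS (q : L)) le_rfl
  exact Subtype.ext (le_antisymm (hle p q hpq) (hle q p hpq.symm))

lemma sInf_mem_SpecS_of_isIrreducible {S : Set (SpecS L)} (hS : IsIrreducible S) :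
    sInf (Subtype.val '' S) ∈ SpecS L := by
  obtain ⟨q₀, hq₀⟩ := hS.nonempty
  refine mem_SpecS_iff.2 ⟨fun htop => q₀.2.1 (top_le_iff.1 (htop ▸ sInf_le ⟨q₀, hq₀, rfl⟩)), ?_⟩
  intro a b hab
  by_contra! hne
  have hmeets (x : L) (hx : ¬ x ≤ sInf (Subtype.val '' S)) : (S ∩ DeltaS x).Nonempty := by
    by_contra! hempty
    refine hx (le_sInf ?_)
    rintro _ ⟨q, hq, rfl⟩
    by_contra hxq
    exact hempty.subset ⟨hq, hxq⟩
  obtain ⟨q, hq, hqa, hqb⟩ :=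
    hS.2 _ _ (isOpen_DeltaS a) (isOpen_DeltaS b) (hmeets a hne.1) (hmeets b hne.2)
  have hqab : q ∈ DeltaS (a ⊓ b) := by rw [DeltaS_inf]; exact ⟨hqa, hqb⟩
  exact hqab (hab.trans (sInf_le ⟨q, hq, rfl⟩))

lemma quasiSober_specTop : QuasiSober (SpecS L) := by
  refine ⟨fun {S} hS hclosed => ?_⟩
  obtain ⟨a, ha⟩ := hclosed.isOpen_compl
  have hmem (q : SpecS L) : q ∈ S ↔ a ≤ q := by
    rw [← compl_compl S, ← ha]
    simp [DeltaS]
  have hap : a ≤ sInf (Subtype.val '' S) := le_sInf fun _ ⟨q, hq, hqp⟩ => hqp ▸ (hmem q).1 hq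
  refine ⟨⟨_, sInf_mem_SpecS_of_isIrreducible hS⟩, ?_⟩
  rw [IsGenericPoint, closure_singleton_eq_compl_DeltaS]
  ext q
  rw [mem_compl_iff, hmem]
  exact ⟨fun hpq => hap.trans (not_not.1 hpq),
    fun haq hpq => hpq (sInf_le ⟨q, (hmem q).2 haq, rfl⟩)⟩

lemma isCompact_notMem_pfilter {F : Order.PFilter L} (hF : DirSupInacc (F : Set L)) :
    IsCompact {q : SpecS L | (q : L) ∉ F} := by
  refine isCompact_of_finite_subcover fun {ι} U hU hcover => ?_
  choose d hd using hU
  have hsup : ⨆ i, d i ∈ F := by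
    by_contra hnot
    obtain ⟨q, hq, hdq, hqF⟩ := exists_mem_SpecS_le_notMem hF hnot
    obtain ⟨i, hi⟩ := mem_iUnion.1 (hcover (show (⟨q, hq⟩ : SpecS L) ∈ _ from hqF))
    rw [← hd i] at hi
    exact hi ((le_iSup d i).trans hdq)
  simp only [iSup_eq_iSup_finset d, ← Finset.sup_eq_iSup] at hsup
  have hdir : DirectedOn (· ≤ ·) (range fun t : Finset ι => t.sup d) :=
    directedOn_range.2 (Monotone.directed_le fun _ _ hst => Finset.sup_mono hst)
  obtain ⟨_, ⟨t, rfl⟩, htF⟩ := hF (range_nonempty _) hdir isLUB_iSup hsup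
  refine ⟨t, fun q hqF => ?_⟩
  have hq : q ∈ DeltaS (t.sup d) := fun hle => hqF (Order.PFilter.mem_of_le hle htF)
  simpa only [DeltaS_finsetSup, hd] using hq

lemma locallyCompactSpace_specTop (hcont : IsContinuousFrame L) :
    LocallyCompactSpace (SpecS L) := by
  refine ⟨fun p n hn => ?_⟩
  obtain ⟨_, hUn, ⟨a, rfl⟩, hpa⟩ := mem_nhds_iff.1 hn
  obtain ⟨b, hba, hbp⟩ := hcont.exists_wayBelow_not_le hpa
  obtain ⟨F, hF, haF, hFb⟩ := hcont.exists_pfilter_dirSupInacc hba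
  refine ⟨_, mem_nhds_iff.2 ⟨DeltaS b, fun q hbq hqF => hbq (hFb _ hqF), isOpen_DeltaS b, hbp⟩,
    fun q hqF => hUn fun haq => hqF (Order.PFilter.mem_of_le haq haF), isCompact_notMem_pfilter hF⟩

end HullKernelTopology

/-- For a continuous frame `L` with a sup-generating sublattice with zero `L_s`,
the pair `(Spec L, Δ_L(L_s))` is a locally small space whose weakly open sets
are exactly `Δ_L(L)`, and the hull-kernel topology on `Spec L` is sober and
locally compact. -/
theorem spectrum_of_continuous_frame {L : Type u} [Order.Frame L] (s : Set L)
    (hbot : ⊥ ∈ s) (hinf : ∀ a ∈ s, ∀ b ∈ s, a ⊓ b ∈ s)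
    (hsup : ∀ a ∈ s, ∀ b ∈ s, a ⊔ b ∈ s)
    (hgen : ∀ a : L, ∃ T ⊆ s, a = sSup T)
    (hcont : IsContinuousFrame L) :
    (∅ : Set (SpecS L)) ∈ DeltaS '' s ∧
    (∀ A ∈ DeltaS '' s, ∀ B ∈ DeltaS '' s, A ∩ B ∈ DeltaS '' s) ∧
    (∀ A ∈ DeltaS '' s, ∀ B ∈ DeltaS '' s, A ∪ B ∈ DeltaS '' s) ∧
    (∀ p : SpecS L, ∃ A ∈ DeltaS '' s, p ∈ A) ∧
    woF (DeltaS '' s) = Set.range (DeltaS (L := L)) ∧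
    @T0Space (SpecS L) (specTop L) ∧
    @QuasiSober (SpecS L) (specTop L) ∧
    @LocallyCompactSpace (SpecS L) (specTop L) := by
  refine ⟨⟨⊥, hbot, DeltaS_bot⟩, ?_, ?_, fun p => ?_, woF_DeltaS_image_eq_range hgen,
    t0Space_specTop, quasiSober_specTop, locallyCompactSpace_specTop hcont⟩
  · rintro _ ⟨a, ha, rfl⟩ _ ⟨b, hb, rfl⟩
    exact ⟨a ⊓ b, hinf a ha b hb, DeltaS_inf a b⟩
  · rintro _ ⟨a, ha, rfl⟩ _ ⟨b, hb, rfl⟩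
    exact ⟨a ⊔ b, hsup a ha b hb, DeltaS_sup a b⟩
  · obtain ⟨T, hTs, hT⟩ := hgen ⊤
    have hp : p ∈ DeltaS (sSup T) := hT ▸ DeltaS_top (L := L) ▸ mem_univ p
    rw [DeltaS_sSup] at hp
    obtain ⟨a, ha, hpa⟩ := mem_iUnion₂.1 hp
    exact ⟨_, mem_image_of_mem _ (hTs ha), hpa⟩
end

section
/- Let f : (X, L_X) → (Y, L_Y) be a bounded continuous map of locally small spaces. Then the preimage map L^wo f : L_Y^wo → L_X^wo, V ↦ f⁻¹(V), is a well-defined frame homomorphism that is dominating (for every W ∈ L_X there exists V ∈ L_Y with f⁻¹(V) ∩ W = W) and compatible (f⁻¹(V) ∩ W ∈ L_X for all V ∈ L_Y and W ∈ L_X). -/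
open Set TopologicalSpace

universe u



variable {L M N : Type u} [Order.Frame L] [Order.Frame M] [Order.Frame N]

/-- The preimage map of a bounded continuous map of locally small spaces is a
well-defined frame homomorphism between the frames of weakly open sets which is
dominating and compatible. -/
theorem preimage_frame_hom_of_bounded_continuous (S T : LSS.{u}) (f : S.X → T.X)
    (hb : IsBdd S.L T.L f) (hc : IsCt S.L T.L f) :
    (∀ V ∈ T.wo, f ⁻¹' V ∈ S.wo) ∧
    (∃ h : FrameHom T.O S.O, ∀ V : T.O, ((h V : S.O) : Set S.X) = f ⁻¹' (V : Set T.X)) ∧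
    (∀ W ∈ S.L, ∃ V ∈ T.L, f ⁻¹' V ∩ W = W) ∧
    (∀ V ∈ T.L, ∀ W ∈ S.L, f ⁻¹' V ∩ W ∈ S.L) := by
  have h1 : ∀ V ∈ T.wo, f ⁻¹' V ∈ S.wo := by
    intro V hV
    rw [LSS.mem_wo_iff]
    intro x hx
    obtain ⟨B, hB, hfxB, hBV⟩ := LSS.mem_wo_iff.mp hV (f x) hx
    obtain ⟨C, hC, hxC⟩ := S.covers x
    refine ⟨f ⁻¹' B ∩ C, hc B hB C hC, ⟨hfxB, hxC⟩, ?_⟩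
    exact (Set.inter_subset_left).trans (Set.preimage_mono hBV)
  refine ⟨h1, ?_, ?_, fun V hV W hW => hc V hV W hW⟩
  · letI := S.top
    letI := T.top
    have hcont : Continuous f := by
      rw [continuous_def]
      intro U hU
      exact h1 U hU
    refine ⟨Opens.comap ⟨f, hcont⟩, fun V => ?_⟩
    rfl
  · intro W hW
    obtain ⟨V, hV, hWV⟩ := hb W hW
    exact ⟨V, hV, Set.inter_eq_right.mpr hWV⟩
end

section
/- Let h : (L, L_s) → (M, M_s) be a dominating compatible frame homomorphism between frames with chosen sup-generating sublattices with zero, and let h_* : M → L be its right Galois adjoint. Then h_* maps Spec(M) into Spec(L), and the restriction h_*|_{Spec(M)} : (Spec(M), Δ_M(M_s)) → (Spec(L), Δ_L(L_s)) is a bounded continuous map of locally small spaces; in particular, for all d ∈ L_s and f ∈ M_s one has (h_*|_{Spec(M)})⁻¹(Δ_L(d)) ∩ Δ_M(f) = Δ_M(h(d) ∧ f). -/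
open Set TopologicalSpace

universe u



variable {L M N : Type u} [Order.Frame L] [Order.Frame M] [Order.Frame N]

/-- The right Galois adjoint of a dominating compatible frame homomorphism maps
primes to primes, and its restriction to the spectra is a bounded continuous
map of locally small spaces. -/
theorem rAdj_restriction_bounded_continuous {L M : Type u}
    [Order.Frame L] [Order.Frame M] (sL : Set L) (sM : Set M)
    (hbotL : ⊥ ∈ sL) (hinfL : ∀ a ∈ sL, ∀ b ∈ sL, a ⊓ b ∈ sL)
    (hsupL : ∀ a ∈ sL, ∀ b ∈ sL, a ⊔ b ∈ sL)
    (hgenL : ∀ a : L, ∃ T ⊆ sL, a = sSup T)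
    (hbotM : ⊥ ∈ sM) (hinfM : ∀ a ∈ sM, ∀ b ∈ sM, a ⊓ b ∈ sM)
    (hsupM : ∀ a ∈ sM, ∀ b ∈ sM, a ⊔ b ∈ sM)
    (hgenM : ∀ a : M, ∃ T ⊆ sM, a = sSup T)
    (h : FrameHom L M)
    (hdom : Dominating sL sM ⇑h) (hcomp : Compatible sL sM ⇑h) :
    ∃ r : SpecS M → SpecS L,
      (∀ p : SpecS M, (r p : L) = rAdj ⇑h (p : M)) ∧
      IsBdd (DeltaS '' sM) (DeltaS '' sL) r ∧
      IsCt (DeltaS '' sM) (DeltaS '' sL) r ∧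
      (∀ d ∈ sL, ∀ f ∈ sM, r ⁻¹' (DeltaS d) ∩ DeltaS f = DeltaS (h d ⊓ f)) := by
  have gc := gc_rAdj h
  set r : SpecS M → SpecS L := fun p => ⟨rAdj ⇑h (p : M), rAdj_mem_SpecS h p.2⟩ with hr
  have key : ∀ (d : L) (f : M), r ⁻¹' (DeltaS d) ∩ DeltaS f = DeltaS (h d ⊓ f) := by
    intro d f
    ext p
    simp only [Set.mem_inter_iff, Set.mem_preimage, DeltaS, Set.mem_setOf_eq]
    constructor
    · rintro ⟨h1, h2⟩ hle
      rcases SpecS.inf_le p.2 hle with hc | hc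
      · exact h1 ((gc d (p : M)).mp hc)
      · exact h2 hc
    · intro h1
      refine ⟨fun h2 => h1 ?_, fun h2 => h1 ?_⟩
      · exact le_trans inf_le_left ((gc d (p : M)).mpr h2)
      · exact le_trans inf_le_right h2
  refine ⟨r, fun p => rfl, ?_, ?_, fun d _ f _ => key d f⟩
  case refine_1 =>
    rintro _ ⟨f, hf, rfl⟩
    obtain ⟨l, hl, hlf⟩ := hdom f hf
    refine ⟨DeltaS l, ⟨l, hl, rfl⟩, ?_⟩
    intro p hp
    simp only [Set.mem_preimage, DeltaS, Set.mem_setOf_eq] at hp ⊢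
    intro h2
    apply hp
    rw [← hlf]
    exact inf_le_of_left_le ((gc l (p : M)).mpr h2)
  case refine_2 =>
    rintro _ ⟨d, hd, rfl⟩ _ ⟨f, hf, rfl⟩
    exact ⟨h d ⊓ f, hcomp d hd f hf, (key d f).symm⟩
end

section
/- Let (X, L_X) be a locally small space. For x ∈ X let ext_X{x} denote the union of all weakly open sets not containing x (the complement of the closure of {x} in the topology L_X^wo). Then ext_X{x} is a non-unit prime element of the frame L_X^wo, and the map λ_X : X → Spec(L_X^wo), x ↦ ext_X{x}, is a bounded continuous map from (X, L_X) to (Spec(L_X^wo), Δ(L_X)), where Δ = Δ_{L_X^wo}; in particular, for every W ∈ L_X one has W = λ_X⁻¹(Δ(W)). -/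
open Set TopologicalSpace

universe u



variable {L M N : Type u} [Order.Frame L] [Order.Frame M] [Order.Frame N]

lemma LSS.not_mem_extSet (S : LSS.{u}) (x : S.X) : x ∉ S.extSet x := by
  rintro ⟨U, ⟨_, hx⟩, hxU⟩; exact hx hxU

lemma LSS.le_extO_iff_s9 {S : LSS.{u}} {U : S.O} {x : S.X} :
    U ≤ S.extO x ↔ x ∉ (U : Set S.X) := by
  letI := S.top
  constructor
  · intro h hx
    exact S.not_mem_extSet x (h hx)
  · intro hx y hy
    have hmem : (U : Set S.X) ∈ {V | V ∈ S.wo ∧ x ∉ V} := ⟨U.2, hx⟩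
    exact subset_sUnion_of_mem hmem hy

lemma LSS.extO_mem_SpecS_s9 (S : LSS.{u}) (x : S.X) : (S.extO x : S.O) ∈ SpecS S.O := by
  letI := S.top
  constructor
  · intro h
    have h2 : (⊤ : S.O) ≤ S.extO x := h ▸ le_rfl
    exact S.not_mem_extSet x (h2 (show x ∈ ((⊤ : S.O) : Set S.X) from Set.mem_univ x))
  · intro a b hab
    have hx : x ∉ ((a ⊓ b : S.O) : Set S.X) := hab ▸ S.not_mem_extSet x
    have hxab : x ∉ (a : Set S.X) ∩ (b : Set S.X) := by
      intro h; exact hx (by exact h)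
    have ha : x ∉ (a : Set S.X) ∨ x ∉ (b : Set S.X) := by
      by_contra h
      push_neg at h
      exact hxab ⟨h.1, h.2⟩
    rcases ha with h | h
    · exact Or.inl (le_antisymm (hab ▸ inf_le_left) (LSS.le_extO_iff_s9.mpr h))
    · exact Or.inr (le_antisymm (hab ▸ inf_le_right) (LSS.le_extO_iff_s9.mpr h))

lemma LSS.preimage_deltaS (S : LSS.{u}) (W : S.O) :
    (fun x => (⟨S.extO x, S.extO_mem_SpecS_s9 x⟩ : ↥(SpecS S.O))) ⁻¹' (DeltaS W)
      = (W : Set S.X) := by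
  letI := S.top
  ext x
  simp only [Set.mem_preimage, DeltaS, Set.mem_setOf_eq]
  constructor
  · intro h
    by_contra hx
    exact h (LSS.le_extO_iff_s9.mpr hx)
  · intro hx hle
    exact S.not_mem_extSet x (hle hx)

/-- For a locally small space `(X, L_X)`, the exterior of every point is a
non-unit prime of the frame of weakly open sets, and `x ↦ ext_X{x}` is a
bounded continuous map `(X, L_X) → (Spec(L_X^wo), Δ(L_X))` with
`W = λ_X⁻¹(Δ(W))` for every `W ∈ L_X`. -/
theorem ext_point_prime_and_lambda_bounded_continuous (S : LSS.{u}) :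
    (∀ x : S.X, (S.extO x : S.O) ∈ SpecS S.O) ∧
    ∃ lam : S.X → ↥(SpecS S.O),
      (∀ x : S.X, ((lam x : S.O) : Set S.X) = S.extSet x) ∧
      IsBdd S.L (DeltaS '' {U : S.O | (U : Set S.X) ∈ S.L}) lam ∧
      IsCt S.L (DeltaS '' {U : S.O | (U : Set S.X) ∈ S.L}) lam ∧
      (∀ W : S.O, (W : Set S.X) ∈ S.L → (W : Set S.X) = lam ⁻¹' (DeltaS W)) := by
  letI := S.top
  refine ⟨S.extO_mem_SpecS_s9, fun x => ⟨S.extO x, S.extO_mem_SpecS_s9 x⟩, fun x => rfl, ?_, ?_, ?_⟩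
  · intro W hW
    refine ⟨DeltaS (⟨W, S.L_subset_wo hW⟩ : S.O), ⟨_, hW, rfl⟩, ?_⟩
    rw [S.preimage_deltaS]
    exact fun y hy => hy
  · rintro V ⟨U, hU, rfl⟩ W hW
    rw [S.preimage_deltaS]
    exact S.inter_mem hU hW
  · intro W hW
    exact (S.preimage_deltaS W).symm
end

section
/- Let L be a frame and L_s a sublattice of L containing 0 that sup-generates L. Then the map Δ_L : (L, L_s) → (Δ_L(L), Δ_L(L_s)) is a surjective frame homomorphism that is dominating and compatible: Δ_L(L_s) dominates Δ_L(L_s), and for every D ∈ Δ_L(L_s) and f ∈ L_s one has D ∩ Δ_L(f) ∈ Δ_L(L_s). Consequently its right Galois adjoint σ_L = (Δ_L)_* : Δ_L(L) → L, A ↦ ⋁{b ∈ L : Δ_L(b) ⊆ A}, is an injective special localic map. -/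
open Set TopologicalSpace

universe u



variable {L M N : Type u} [Order.Frame L] [Order.Frame M] [Order.Frame N]

/-- The frame of hull-kernel open subsets of the spectrum. -/
abbrev SpOp (L : Type u) [Order.Frame L] : Type u :=
  @Opens (↥(SpecS L)) (specTop L)

noncomputable instance (L : Type u) [Order.Frame L] : Order.Frame (SpOp L) :=
  letI := specTop L
  inferInstanceAs (Order.Frame (Opens (↥(SpecS L))))

/-- `Δ_L` as a map into the frame of hull-kernel open sets. -/
def DeltaO {L : Type u} [Order.Frame L] (a : L) : SpOp L :=
  letI := specTop L
  ⟨DeltaS a, ⟨a, rfl⟩⟩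

/-- `Δ_L : (L, L_s) → (Δ_L(L), Δ_L(L_s))` is a surjective dominating compatible
frame homomorphism, and its right Galois adjoint `σ_L` is injective. -/
theorem DeltaO_surjective_dominating_compatible {L : Type u} [Order.Frame L]
    (s : Set L) (hbot : ⊥ ∈ s) (hinf : ∀ a ∈ s, ∀ b ∈ s, a ⊓ b ∈ s)
    (hsup : ∀ a ∈ s, ∀ b ∈ s, a ⊔ b ∈ s)
    (hgen : ∀ a : L, ∃ T ⊆ s, a = sSup T) :
    Function.Surjective (DeltaO (L := L)) ∧
    DeltaO (⊤ : L) = ⊤ ∧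
    (∀ a b : L, DeltaO (a ⊓ b) = DeltaO a ⊓ DeltaO b) ∧
    (∀ T : Set L, DeltaO (sSup T) = sSup (DeltaO '' T)) ∧
    Dominating s (DeltaO '' s) (DeltaO (L := L)) ∧
    Compatible s (DeltaO '' s) (DeltaO (L := L)) ∧
    (fun A : SpOp L => sSup {b : L | DeltaS b ⊆ (A : Set (SpecS L))})
      = rAdj (DeltaO (L := L)) ∧
    Function.Injective
      (fun A : SpOp L => sSup {b : L | DeltaS b ⊆ (A : Set (SpecS L))}) := by
  letI := specTop L
  have hext : ∀ A B : SpOp L, (A : Set (SpecS L)) = (B : Set (SpecS L)) → A = B :=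
    fun A B h => SetLike.coe_injective h
  have hle : ∀ (a : L) (A : SpOp L), DeltaO a ≤ A ↔ DeltaS a ⊆ (A : Set (SpecS L)) :=
    fun a A => Iff.rfl
  have hsurj : Function.Surjective (DeltaO (L := L)) := by
    rintro ⟨U, a, rfl⟩
    exact ⟨a, rfl⟩
  have hinf' : ∀ a b : L, DeltaO (a ⊓ b) = DeltaO a ⊓ DeltaO b := by
    intro a b
    apply hext
    show DeltaS (a ⊓ b) = (DeltaO a : Set (SpecS L)) ∩ (DeltaO b : Set (SpecS L))
    exact DeltaS_inf a b
  -- key: DeltaO (σ A) = A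
  have hkey : ∀ A : SpOp L,
      DeltaO (sSup {b : L | DeltaS b ⊆ (A : Set (SpecS L))}) = A := by
    intro A
    apply hext
    show DeltaS (sSup {b : L | DeltaS b ⊆ (A : Set (SpecS L))}) = (A : Set (SpecS L))
    rw [DeltaS_sSup]
    apply Set.Subset.antisymm
    · intro p hp
      simp only [mem_iUnion] at hp
      obtain ⟨b, hb, hpb⟩ := hp
      exact hb hpb
    · obtain ⟨a, ha⟩ := hsurj A
      intro p hp
      have : DeltaS a ⊆ (A : Set (SpecS L)) := by
        rw [← ha]; exact subset_rfl
      simp only [mem_iUnion]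
      refine ⟨a, this, ?_⟩
      rw [← ha] at hp
      exact hp
  refine ⟨hsurj, ?_, hinf', ?_, ?_, ?_, ?_, ?_⟩
  · apply hext
    show DeltaS (⊤ : L) = ((⊤ : SpOp L) : Set (SpecS L))
    rw [DeltaS_top]
    rfl
  · intro T
    apply hext
    show DeltaS (sSup T) = (sSup (DeltaO '' T) : SpOp L)
    rw [DeltaS_sSup, Opens.coe_sSup]
    ext p
    simp only [mem_iUnion, Set.mem_image]
    constructor
    · rintro ⟨a, ha, hpa⟩
      exact ⟨DeltaO a, ⟨a, ha, rfl⟩, hpa⟩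
    · rintro ⟨U, ⟨a, ha, rfl⟩, hpa⟩
      exact ⟨a, ha, hpa⟩
  · rintro m ⟨l, hl, rfl⟩
    exact ⟨l, hl, inf_idem _⟩
  · rintro l hl m ⟨l', hl', rfl⟩
    exact ⟨l ⊓ l', hinf l hl l' hl', hinf' l l'⟩
  · funext A
    show sSup {b : L | DeltaS b ⊆ (A : Set (SpecS L))} = sSup {l | DeltaO l ≤ A}
    congr 1
  · intro A B h
    have hA := hkey A
    have hB := hkey B
    simp only at h
    rw [← hA, ← hB, h]
end

section
/- (First triangle identity of the spectral adjunction) Let L be a frame and L_s a sublattice of L containing 0 that sup-generates L. Then for every p ∈ Spec(L), σ_L( ext_{Spec(L)}{p} ) = p, where ext_{Spec(L)}{p} is the union of all hull-kernel open sets of Spec(L) not containing p, and σ_L(A) = ⋁{b ∈ L : Δ_L(b) ⊆ A}. In other words, σ_L restricted to Spec(Δ_L(L)) composed with λ_{Spec(L)} is the identity of Spec(L). -/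
open Set TopologicalSpace

universe u



variable {L M N : Type u} [Order.Frame L] [Order.Frame M] [Order.Frame N]

/-- First triangle identity of the spectral adjunction: for every
`p ∈ Spec(L)`, `σ_L(ext_{Spec L}{p}) = p`. -/
theorem first_triangle_identity {L : Type u} [Order.Frame L]
    (s : Set L) (hbot : ⊥ ∈ s) (hinf : ∀ a ∈ s, ∀ b ∈ s, a ⊓ b ∈ s)
    (hsup : ∀ a ∈ s, ∀ b ∈ s, a ⊔ b ∈ s)
    (hgen : ∀ a : L, ∃ T ⊆ s, a = sSup T) :
    ∀ p : SpecS L,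
      sSup {b : L | DeltaS b ⊆
          ⋃₀ {Z : Set (SpecS L) | Z ∈ Set.range (DeltaS (L := L)) ∧ p ∉ Z}}
        = (p : L) := by
  intro p
  apply le_antisymm
  · apply sSup_le
    intro b hb
    by_contra hbp
    have hp : p ∈ DeltaS b := hbp
    obtain ⟨Z, ⟨_, hpZ⟩, hpZ'⟩ := hb hp
    exact hpZ hpZ'
  · apply le_sSup
    intro q hq
    exact ⟨DeltaS (p : L), ⟨⟨_, rfl⟩, fun h => h le_rfl⟩, hq⟩
end

section
/- Let L_{l⁺om} be the family of all finite unions of open intervals of ℝ that are bounded from above (including the empty union), so that (ℝ, L_{l⁺om}) is a locally small space whose weakly open sets form the natural topology on ℝ. Then: (1) arctan : ℝ → ℝ is bounded and continuous as a map (ℝ, L_{l⁺om}) → (ℝ, L_{l⁺om}); (2) x ↦ −x is continuous but not bounded as a map (ℝ, L_{l⁺om}) → (ℝ, L_{l⁺om}); (3) sin : ℝ → ℝ is bounded but not continuous as a map (ℝ, L_{l⁺om}) → (ℝ, L_{l⁺om}); (4) x ↦ exp(−x) is continuous but not bounded as a map (ℝ, L_{l⁺om}) → (ℝ, L_{l⁺om}).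 -/
open Set TopologicalSpace

universe u

/-- The smopology of finite unions of open intervals of `ℝ` that are bounded
from above (the lower endpoint may be `-∞`). -/
def Llom : Set (Set ℝ) :=
  {U | ∃ F : Finset (EReal × ℝ),
    U = ⋃ p ∈ F, {x : ℝ | p.1 < (x : EReal) ∧ x < p.2}}

/-!
A nonempty open, order-connected, bounded-above subset `S` of `ℝ` is the single interval with
endpoints `sInf S` (taken in `EReal`) and `sSup S`. So `L_{l⁺om}` is closed under intersections,
and the preimage of a member under a continuous monotone or antitone map, cut down by another
member, is again a member. Boundedness into `L_{l⁺om}` just means that members are sent to sets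
bounded from above, which fails for maps tending to `+∞` at `-∞`. Finally `sin⁻¹' (0, 2) ∩ (-∞, π)`
is not a member: by pigeonhole one of finitely many intervals would contain two of the points
`π/2 - 2πk`, hence also the point in between where `sin = -1`.
-/

open Real Filter

def lomInterval (p : EReal × ℝ) : Set ℝ := {x | p.1 < (x : EReal) ∧ x < p.2}

lemma isOpen_lomInterval (p : EReal × ℝ) : IsOpen (lomInterval p) :=
  (isOpen_Ioi.preimage continuous_coe_real_ereal).inter isOpen_Iio

lemma ordConnected_lomInterval (p : EReal × ℝ) : (lomInterval p).OrdConnected :=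
  ⟨fun _ hx _ hy _ hz =>
    ⟨hx.1.trans_le (EReal.coe_le_coe_iff.2 hz.1), hz.2.trans_lt hy.2⟩⟩

lemma bddAbove_lomInterval (p : EReal × ℝ) : BddAbove (lomInterval p) :=
  ⟨p.2, fun _ hx => hx.2.le⟩

namespace Llom

lemma empty_mem : (∅ : Set ℝ) ∈ Llom := ⟨∅, by simp⟩

lemma lomInterval_mem (p : EReal × ℝ) : lomInterval p ∈ Llom :=
  ⟨{p}, by rw [Finset.set_biUnion_singleton]; rfl⟩

lemma Ioo_mem (a b : ℝ) : Ioo a b ∈ Llom := by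
  convert lomInterval_mem ((a : EReal), b) using 1
  ext x
  simp [lomInterval]

lemma Iio_mem (b : ℝ) : Iio b ∈ Llom := by
  convert lomInterval_mem ((⊥ : EReal), b) using 1
  ext x
  simp [lomInterval]

lemma union_mem {A B : Set ℝ} (hA : A ∈ Llom) (hB : B ∈ Llom) : A ∪ B ∈ Llom := by
  obtain ⟨F, rfl⟩ := hA
  obtain ⟨G, rfl⟩ := hB
  exact ⟨F ∪ G, by rw [Finset.set_biUnion_union]⟩

lemma biUnion_mem {ι : Type*} (s : Finset ι) {A : ι → Set ℝ} (h : ∀ i ∈ s, A i ∈ Llom) :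
    (⋃ i ∈ s, A i) ∈ Llom := by
  classical
  induction s using Finset.induction with
  | empty => simpa using empty_mem
  | insert i s _ ih =>
    rw [Finset.set_biUnion_insert]
    exact union_mem (h i (s.mem_insert_self i))
      (ih fun j hj => h j (Finset.mem_insert_of_mem hj))

lemma isOpen {U : Set ℝ} (hU : U ∈ Llom) : IsOpen U := by
  obtain ⟨F, rfl⟩ := hU
  exact isOpen_biUnion fun p _ => isOpen_lomInterval p

lemma bddAbove {U : Set ℝ} (hU : U ∈ Llom) : BddAbove U := by
  obtain ⟨F, rfl⟩ := hU
  rw [← Finset.set_biUnion_coe]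
  exact F.finite_toSet.bddAbove_biUnion.2 fun p _ => bddAbove_lomInterval p

lemma mem_of_isOpen_of_ordConnected {S : Set ℝ} (ho : IsOpen S) (hc : S.OrdConnected)
    (hb : BddAbove S) : S ∈ Llom := by
  rcases S.eq_empty_or_nonempty with rfl | hne
  · exact empty_mem
  suffices S = lomInterval (sInf (((↑) : ℝ → EReal) '' S), sSup S) from
    this ▸ lomInterval_mem _
  ext x
  constructor
  · intro hx
    obtain ⟨l, u, ⟨hlx, hxu⟩, hsub⟩ := mem_nhds_iff_exists_Ioo_subset.1 (ho.mem_nhds hx)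
    obtain ⟨y, hly, hyx⟩ := exists_between hlx
    obtain ⟨z, hxz, hzu⟩ := exists_between hxu
    exact ⟨(sInf_le (mem_image_of_mem _ (hsub ⟨hly, hyx.trans hxu⟩))).trans_lt
        (EReal.coe_lt_coe_iff.2 hyx),
      hxz.trans_le (le_csSup hb (hsub ⟨hlx.trans hxz, hzu⟩))⟩
  · rintro ⟨hax, hxb⟩
    obtain ⟨_, ⟨s, hs, rfl⟩, hsx⟩ := sInf_lt_iff.1 hax
    obtain ⟨t, ht, hxt⟩ := exists_lt_of_lt_csSup hne hxb
    exact hc.out hs ht ⟨(EReal.coe_lt_coe_iff.1 hsx).le, hxt.le⟩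

lemma biUnion_inter_mem {ι : Type*} (s : Finset ι) {A : ι → Set ℝ}
    (ho : ∀ i ∈ s, IsOpen (A i)) (hc : ∀ i ∈ s, (A i).OrdConnected) {W : Set ℝ}
    (hW : W ∈ Llom) : (⋃ i ∈ s, A i) ∩ W ∈ Llom := by
  obtain ⟨G, rfl⟩ := hW
  rw [iUnion₂_inter]
  refine biUnion_mem s fun i hi => ?_
  rw [inter_iUnion₂]
  exact biUnion_mem G fun q _ =>
    mem_of_isOpen_of_ordConnected ((ho i hi).inter (isOpen_lomInterval q))
      ((hc i hi).inter (ordConnected_lomInterval q))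
      ((bddAbove_lomInterval q).mono inter_subset_right)

lemma inter_mem {A B : Set ℝ} (hA : A ∈ Llom) (hB : B ∈ Llom) : A ∩ B ∈ Llom := by
  obtain ⟨F, rfl⟩ := hA
  exact biUnion_inter_mem F (fun p _ => isOpen_lomInterval p)
    (fun p _ => ordConnected_lomInterval p) hB

lemma sUnion_eq_univ : ⋃₀ Llom = univ :=
  sUnion_eq_univ_iff.2 fun x => ⟨Iio (x + 1), Iio_mem _, by simp⟩

lemma woF_eq : woF Llom = {U : Set ℝ | IsOpen U} := by
  ext U
  constructor
  · rintro ⟨F, hF, rfl⟩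
    exact isOpen_sUnion fun V hV => isOpen (hF hV)
  · intro (hU : IsOpen U)
    refine ⟨{V | V ∈ Llom ∧ V ⊆ U}, fun V hV => hV.1, subset_antisymm (fun x hx => ?_)
      (sUnion_subset fun V hV => hV.2)⟩
    obtain ⟨l, u, hxlu, hsub⟩ := mem_nhds_iff_exists_Ioo_subset.1 (hU.mem_nhds hx)
    exact ⟨Ioo l u, ⟨Ioo_mem l u, hsub⟩, hxlu⟩

lemma exists_lt_uIcc_subset {U : Set ℝ} (hU : U ∈ Llom) (x : ℕ → ℝ) (hx : ∀ k, x k ∈ U) :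
    ∃ m n, m < n ∧ uIcc (x m) (x n) ⊆ U := by
  obtain ⟨F, rfl⟩ := hU
  have hp : ∀ k, ∃ p ∈ F, x k ∈ lomInterval p := fun k => by
    obtain ⟨p, hpF, hxp⟩ := mem_iUnion₂.1 (hx k)
    exact ⟨p, hpF, hxp⟩
  choose p hpF hxp using hp
  obtain ⟨m, n, hmn, hpmn⟩ := F.finite_toSet.exists_lt_map_eq_of_forall_mem hpF
  refine ⟨m, n, hmn, ?_⟩
  refine ((ordConnected_lomInterval (p m)).uIcc_subset (hxp m) (hpmn ▸ hxp n)).trans ?_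
  exact subset_biUnion_of_mem (u := lomInterval) (hpF m)

end Llom

lemma isCt_Llom_of_continuous {f : ℝ → ℝ} (hf : Continuous f)
    (hc : ∀ p, (f ⁻¹' lomInterval p).OrdConnected) : IsCt Llom Llom f := by
  rintro V ⟨F, rfl⟩ W hW
  rw [preimage_iUnion₂]
  exact Llom.biUnion_inter_mem F (fun p _ => (isOpen_lomInterval p).preimage hf)
    (fun p _ => hc p) hW

lemma Monotone.isCt_Llom {f : ℝ → ℝ} (hf : Continuous f) (hm : Monotone f) :
    IsCt Llom Llom f :=
  isCt_Llom_of_continuous hf fun p =>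
    ⟨fun _ hx _ hy _ hz => (ordConnected_lomInterval p).out hx hy ⟨hm hz.1, hm hz.2⟩⟩

lemma Antitone.isCt_Llom {f : ℝ → ℝ} (hf : Continuous f) (hm : Antitone f) :
    IsCt Llom Llom f :=
  isCt_Llom_of_continuous hf fun p =>
    ⟨fun _ hx _ hy _ hz => (ordConnected_lomInterval p).out hy hx ⟨hm hz.2, hm hz.1⟩⟩

lemma isBdd_Llom_iff {X : Type*} {LX : Set (Set X)} {f : X → ℝ} :
    IsBdd LX Llom f ↔ ∀ W ∈ LX, BddAbove (f '' W) := by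
  constructor
  · intro h W hW
    obtain ⟨V, hV, hWV⟩ := h W hW
    exact (Llom.bddAbove hV).mono (image_subset_iff.2 hWV)
  · intro h W hW
    obtain ⟨M, hM⟩ := h W hW
    exact ⟨Iio (M + 1), Llom.Iio_mem _,
      fun x hx => (hM (mem_image_of_mem f hx)).trans_lt (lt_add_one M)⟩

lemma isBdd_Llom_of_bddAbove_range {X : Type*} {LX : Set (Set X)} {f : X → ℝ}
    (hf : BddAbove (range f)) : IsBdd LX Llom f :=
  isBdd_Llom_iff.2 fun _ _ => hf.mono (image_subset_range f _)

lemma not_isBdd_Llom_of_tendsto {f : ℝ → ℝ} (hf : Tendsto f atBot atTop) :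
    ¬ IsBdd Llom Llom f := by
  intro h
  obtain ⟨M, hM⟩ := isBdd_Llom_iff.1 h (Iio 0) (Llom.Iio_mem 0)
  obtain ⟨x, hMx, hx⟩ := ((hf.eventually_gt_atTop M).and (eventually_lt_atBot 0)).exists
  exact (hM (mem_image_of_mem f (mem_Iio.2 hx))).not_gt hMx

lemma not_isCt_Llom_sin : ¬ IsCt Llom Llom sin := by
  intro h
  set x : ℕ → ℝ := fun k => π / 2 - k * (2 * π) with hx
  have hsin : ∀ k, sin (x k) = 1 := fun k => by rw [hx, sin_sub_nat_mul_two_pi, sin_pi_div_two]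
  have hxU : ∀ k, x k ∈ sin ⁻¹' Ioo 0 2 ∩ Iio π := fun k => by
    refine ⟨by simp [hsin k], ?_⟩
    have : (0 : ℝ) ≤ k * (2 * π) := by positivity
    simp only [hx, mem_Iio]
    linarith [pi_pos]
  obtain ⟨m, n, hmn, hsub⟩ :=
    Llom.exists_lt_uIcc_subset (h _ (Llom.Ioo_mem 0 2) _ (Llom.Iio_mem π)) x hxU
  have hgap : x n + π ≤ x m := by
    have : (m : ℝ) + 1 ≤ n := by exact_mod_cast hmn
    simp only [hx]
    nlinarith [pi_pos]
  have hpos : 0 < sin (x n + π) := (hsub (Icc_subset_uIcc' ⟨by linarith [pi_pos], hgap⟩)).1.1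
  rw [sin_add_pi, hsin n] at hpos
  norm_num at hpos

/-- `(ℝ, L_{l⁺om})` is a locally small space whose weakly open sets form the
natural topology of `ℝ`; `arctan` is bounded continuous, `x ↦ -x` is
continuous but not bounded, `sin` is bounded but not continuous, and
`x ↦ exp(-x)` is continuous but not bounded. -/
theorem Llom_examples :
    ∅ ∈ Llom ∧
    (∀ A ∈ Llom, ∀ B ∈ Llom, A ∩ B ∈ Llom) ∧
    (∀ A ∈ Llom, ∀ B ∈ Llom, A ∪ B ∈ Llom) ∧
    ⋃₀ Llom = (Set.univ : Set ℝ) ∧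
    woF Llom = {U : Set ℝ | IsOpen U} ∧
    IsBdd Llom Llom Real.arctan ∧ IsCt Llom Llom Real.arctan ∧
    IsCt Llom Llom (fun x : ℝ => -x) ∧ ¬ IsBdd Llom Llom (fun x : ℝ => -x) ∧
    IsBdd Llom Llom Real.sin ∧ ¬ IsCt Llom Llom Real.sin ∧
    IsCt Llom Llom (fun x : ℝ => Real.exp (-x)) ∧
    ¬ IsBdd Llom Llom (fun x : ℝ => Real.exp (-x)) :=
  ⟨Llom.empty_mem, fun _ hA _ hB => Llom.inter_mem hA hB, fun _ hA _ hB => Llom.union_mem hA hB,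
    Llom.sUnion_eq_univ, Llom.woF_eq,
    isBdd_Llom_of_bddAbove_range ⟨π / 2, forall_mem_range.2 fun x => (arctan_lt_pi_div_two x).le⟩,
    arctan_strictMono.monotone.isCt_Llom continuous_arctan,
    monotone_id.neg.isCt_Llom continuous_neg,
    not_isBdd_Llom_of_tendsto tendsto_neg_atBot_atTop,
    isBdd_Llom_of_bddAbove_range ⟨1, forall_mem_range.2 sin_le_one⟩,
    not_isCt_Llom_sin,
    (exp_monotone.comp_antitone monotone_id.neg).isCt_Llom
      (continuous_exp.comp continuous_neg),
    not_isBdd_Llom_of_tendsto (tendsto_exp_atTop.comp tendsto_neg_atBot_atTop)⟩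
end
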